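/- For every α ≥ 0 and β > 0, the second raw moment of the Modified Rician distribution MR(α,β) equals α² + 4αβ + 2β²; that is, ∫_0^∞ t² · (1/β) · exp(−(t+α)/β) · I₀(2√(tα)/β) dt = α² + 4αβ + 2β². Consequently, the variance of MR(α,β) equals β² + 2αβ. -/

import Mathlib

/-!
Expanding `I₀` in its power series, `t² p_MR(t)` becomes a series of nonnegative gamma
integrands `mrCoeff α β k · t^(k+2) e^(-t/β)`, so it may be integrated term by term. With `a = α/β`, the `k`-th
integral is `e^(-a) β² (k+1)(k+2) aᵏ / k!`, and writing `(k+1)(k+2) = k(k-1) + 4k + 2` sums these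
to `e^(-a) β² (a² + 4a + 2) eᵃ = α² + 4αβ + 2β²`.
-/

open MeasureTheory Real

/-- The modified Bessel function of the first kind of order zero,
`I₀(x) = ∑_{k=0}^∞ (x/2)^{2k} / (k!)²`. -/
noncomputable def besselI0 (x : ℝ) : ℝ :=
  ∑' k : ℕ, (x / 2) ^ (2 * k) / ((Nat.factorial k : ℝ)) ^ 2

open Set
open scoped Nat

theorem besselI0_eq_tsum (x : ℝ) : besselI0 x = ∑' k : ℕ, (x ^ 2 / 4) ^ k / (k ! : ℝ) ^ 2 := by
  unfold besselI0
  congr! 2 with k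
  rw [pow_mul, div_pow]
  norm_num

theorem hasSum_descFactorial_mul_pow_div_factorial (m : ℕ) (x : ℝ) :
    HasSum (fun k : ℕ => (k.descFactorial m : ℝ) * x ^ k / k !) (x ^ m * exp x) := by
  rw [← hasSum_nat_add_iff' m]
  have hvanish : ∑ k ∈ Finset.range m, (k.descFactorial m : ℝ) * x ^ k / k ! = 0 :=
    Finset.sum_eq_zero fun k hk => by
      rw [Nat.descFactorial_eq_zero_iff_lt.mpr (Finset.mem_range.mp hk)]; simp
  rw [hvanish, sub_zero, exp_eq_exp_ℝ]
  refine ((NormedSpace.expSeries_div_hasSum_exp x).mul_left (x ^ m)).congr_fun fun k => ?_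
  have h := Nat.factorial_mul_descFactorial (Nat.le_add_left m k)
  rw [Nat.add_sub_cancel] at h
  rw [← h, pow_add]
  push_cast
  field_simp

theorem hasSum_succ_mul_succ_succ_mul_pow_div_factorial (x : ℝ) :
    HasSum (fun k : ℕ => ((k : ℝ) + 1) * (k + 2) * x ^ k / k !)
      ((x ^ 2 + 4 * x + 2) * exp x) := by
  have h := ((hasSum_descFactorial_mul_pow_div_factorial 2 x).add
    ((hasSum_descFactorial_mul_pow_div_factorial 1 x).mul_left 4)).add
    ((hasSum_descFactorial_mul_pow_div_factorial 0 x).mul_left 2)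
  convert h using 1
  · ext k
    rw [Nat.cast_descFactorial_two]
    simp only [Nat.descFactorial_one, Nat.descFactorial_zero]
    push_cast
    ring
  · ring

theorem integral_pow_mul_exp_neg_mul_Ioi (n : ℕ) {b : ℝ} (hb : 0 < b) :
    ∫ t in Ioi (0 : ℝ), t ^ n * exp (-(b * t)) = n ! / b ^ (n + 1) := by
  have h := integral_rpow_mul_exp_neg_mul_Ioi (a := n + 1) (by positivity) hb
  simp only [add_sub_cancel_right, rpow_natCast, Gamma_nat_eq_factorial] at h
  rw [h, ← Nat.cast_add_one, rpow_natCast, one_div, inv_pow, div_eq_mul_inv, mul_comm]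

theorem integrableOn_pow_mul_exp_neg_mul_Ioi (n : ℕ) {b : ℝ} (hb : 0 < b) :
    IntegrableOn (fun t : ℝ => t ^ n * exp (-(b * t))) (Ioi 0) :=
  .of_integral_ne_zero (by rw [integral_pow_mul_exp_neg_mul_Ioi n hb]; positivity)

theorem integral_tsum_mul_pow_mul_exp_neg_mul_Ioi {c : ℕ → ℝ} {e : ℕ → ℕ} {b S : ℝ}
    (hb : 0 < b) (hc : ∀ k, 0 ≤ c k) (hS : HasSum (fun k => c k * (e k)! / b ^ (e k + 1)) S) :
    ∫ t in Ioi (0 : ℝ), ∑' k, c k * (t ^ e k * exp (-(b * t))) = S := by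
  have hterm : ∀ k, ∫ t in Ioi (0 : ℝ), c k * (t ^ e k * exp (-(b * t)))
      = c k * (e k)! / b ^ (e k + 1) := fun k => by
    rw [integral_const_mul, integral_pow_mul_exp_neg_mul_Ioi _ hb, mul_div_assoc]
  have hnorm : ∀ k, ∫ t in Ioi (0 : ℝ), ‖c k * (t ^ e k * exp (-(b * t)))‖
      = c k * (e k)! / b ^ (e k + 1) := fun k => by
    rw [← hterm]
    refine setIntegral_congr_fun measurableSet_Ioi fun t (ht : 0 < t) => ?_
    exact Real.norm_of_nonneg (by have := hc k; positivity)
  rw [← integral_tsum_of_summable_integral_norm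
    (fun k => (integrableOn_pow_mul_exp_neg_mul_Ioi (e k) hb).const_mul (c k))
    (by simpa only [hnorm] using hS.summable)]
  simpa only [hterm] using hS.tsum_eq

noncomputable def mrDensity (α β t : ℝ) : ℝ :=
  (1 / β) * exp (-((t + α) / β)) * besselI0 (2 * √(t * α) / β)

noncomputable def mrCoeff (α β : ℝ) (k : ℕ) : ℝ :=
  exp (-(α / β)) / β * (α / β ^ 2) ^ k / (k ! : ℝ) ^ 2

theorem sq_mul_mrDensity_eq_tsum {α t : ℝ} (β : ℝ) (hα : 0 ≤ α) (ht : 0 ≤ t) :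
    t ^ 2 * mrDensity α β t = ∑' k, mrCoeff α β k * (t ^ (k + 2) * exp (-(β⁻¹ * t))) := by
  have hsq : (2 * √(t * α) / β) ^ 2 / 4 = t * α / β ^ 2 := by
    rw [div_pow, mul_pow, sq_sqrt (by positivity)]
    ring
  have hexp : exp (-((t + α) / β)) = exp (-(α / β)) * exp (-(β⁻¹ * t)) := by
    rw [← exp_add]
    ring_nf
  rw [mrDensity, besselI0_eq_tsum, hsq, ← tsum_mul_left, ← tsum_mul_left, hexp]
  refine tsum_congr fun k => ?_
  rw [mrCoeff]
  ring

theorem hasSum_mrCoeff_mul_factorial (α : ℝ) {β : ℝ} (hβ : β ≠ 0) :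
    HasSum (fun k => mrCoeff α β k * (k + 2)! / β⁻¹ ^ (k + 2 + 1))
      (α ^ 2 + 4 * α * β + 2 * β ^ 2) := by
  have hexp : exp (-(α / β)) * exp (α / β) = 1 := by rw [← exp_add, neg_add_cancel, exp_zero]
  have hpoly : β ^ 2 * ((α / β) ^ 2 + 4 * (α / β) + 2) = α ^ 2 + 4 * α * β + 2 * β ^ 2 := by
    field_simp
  have hval : exp (-(α / β)) * β ^ 2 * (((α / β) ^ 2 + 4 * (α / β) + 2) * exp (α / β))
      = α ^ 2 + 4 * α * β + 2 * β ^ 2 := by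
    linear_combination (β ^ 2 * ((α / β) ^ 2 + 4 * (α / β) + 2)) * hexp + hpoly
  have h := (hasSum_succ_mul_succ_succ_mul_pow_div_factorial (α / β)).mul_left
    (exp (-(α / β)) * β ^ 2)
  rw [hval] at h
  refine h.congr_fun fun k => ?_
  simp only [mrCoeff, Nat.factorial_succ, inv_pow, div_pow]
  push_cast
  field_simp
  ring

theorem integral_sq_mul_mrDensity {α β : ℝ} (hα : 0 ≤ α) (hβ : 0 < β) :
    ∫ t in Ioi (0 : ℝ), t ^ 2 * mrDensity α β t = α ^ 2 + 4 * α * β + 2 * β ^ 2 := by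
  rw [setIntegral_congr_fun measurableSet_Ioi
    fun t (ht : 0 < t) => sq_mul_mrDensity_eq_tsum β hα ht.le]
  exact integral_tsum_mul_pow_mul_exp_neg_mul_Ioi (inv_pos.2 hβ)
    (fun k => by rw [mrCoeff]; positivity) (hasSum_mrCoeff_mul_factorial α hβ.ne')

/-- The second raw moment of the Modified Rician distribution `MR(α,β)` equals
`α² + 4αβ + 2β²`; consequently its variance (second raw moment minus the square of
the mean `α + β`) equals `β² + 2αβ`. -/
theorem mrDensity_second_moment_and_variance (α β : ℝ) (hα : 0 ≤ α) (hβ : 0 < β) :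
    (∫ t in Set.Ioi (0 : ℝ),
      t ^ 2 * ((1 / β) * Real.exp (-((t + α) / β)) * besselI0 (2 * Real.sqrt (t * α) / β)))
      = α ^ 2 + 4 * α * β + 2 * β ^ 2
    ∧ (∫ t in Set.Ioi (0 : ℝ),
      t ^ 2 * ((1 / β) * Real.exp (-((t + α) / β)) * besselI0 (2 * Real.sqrt (t * α) / β)))
      - (α + β) ^ 2 = β ^ 2 + 2 * α * β := by
  have hmoment := integral_sq_mul_mrDensity hα hβ
  unfold mrDensity at hmoment
  exact ⟨hmoment, by rw [hmoment]; ring⟩
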